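/- arXiv:1904.04979 — 2 statements merged into one kernel-verified Lean document; each statement's English description precedes it below -/
import Mathlib

section
/- Let G be a finite group, M a monoid functor for G, and H ≤ G. For (K,s),(U,t) ∈ S(H,M), the elements (H/K, π_s) and (H/U, π_t) are isomorphic as elements of T^M_H if and only if (K,s) = h.(U,t) for some h ∈ H; consequently, the classes [(H/K)_s] for (K,s) ∈ R(H,M) form a Z-basis of the M-Burnside ring Ω(H,M). -/
set_option linter.unusedSectionVars false
set_option linter.unusedVariables false

open scoped Classical

namespace LB
noncomputable section

variable {G : Type*} [Group G]

def conjS (g : G) (K : Subgroup G) : Subgroup G :=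
  K.map ((MulAut.conj g).toMonoidHom)

theorem mem_conjS {g x : G} {K : Subgroup G} : x ∈ conjS g K ↔ g⁻¹ * x * g ∈ K := by
  unfold conjS
  rw [Subgroup.mem_map]
  constructor
  · rintro ⟨y, hy, rfl⟩
    have h2 : g⁻¹ * ((MulAut.conj g).toMonoidHom y) * g = y := by
      simp only [MulEquiv.coe_toMonoidHom, MulAut.conj_apply]; group
    rw [h2]; exact hy
  · intro h
    refine ⟨g⁻¹ * x * g, h, ?_⟩
    simp only [MulEquiv.coe_toMonoidHom, MulAut.conj_apply]; group

theorem conjS_mono (g : G) {K K' : Subgroup G} (h : K ≤ K') : conjS g K ≤ conjS g K' :=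
  Subgroup.map_mono h


/-- The Möbius function of a finite partial order. -/
noncomputable def mob {α : Type*} [PartialOrder α] [Finite α] (a b : α) : ℤ :=
  letI : Fintype α := Fintype.ofFinite α
  letI : @DecidableRel α α (· < ·) := Classical.decRel _
  letI : LocallyFiniteOrder α := Fintype.toLocallyFiniteOrder
  IncidenceAlgebra.mu ℤ a b

/-- A monoid functor for `G` (Definition 2.2 of the paper). -/
structure MonoidFunctor (G : Type*) [Group G] where
  M : Subgroup G → Type*
  instM : ∀ K, Monoid (M K)
  con : ∀ (g : G) (K : Subgroup G), M K →* M (conjS g K)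
  res : ∀ {K H : Subgroup G}, K ≤ H → (M H →* M K)
  con_mul : ∀ (g r : G) (K : Subgroup G) (s : M K),
    (⟨conjS g (conjS r K), con g (conjS r K) (con r K s)⟩ : Σ K : Subgroup G, M K)
      = ⟨conjS (g * r) K, con (g * r) K s⟩
  con_id : ∀ (K : Subgroup G) (h : G), h ∈ K → ∀ s : M K,
    (⟨conjS h K, con h K s⟩ : Σ K : Subgroup G, M K) = ⟨K, s⟩
  res_res : ∀ {L K H : Subgroup G} (hLK : L ≤ K) (hKH : K ≤ H) (s : M H),
    res hLK (res hKH s) = res (hLK.trans hKH) s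
  res_self : ∀ (H : Subgroup G) (s : M H), res le_rfl s = s
  con_res : ∀ (g : G) {K H : Subgroup G} (hKH : K ≤ H) (s : M H),
    con g K (res hKH s) = res (conjS_mono g hKH) (con g H s)

attribute [instance] MonoidFunctor.instM

variable (Mf : MonoidFunctor G)

/-- The disjoint union of the monoids `M K`. -/
abbrev Sig (Mf : MonoidFunctor G) := Σ K : Subgroup G, Mf.M K

/-- The conjugation action on pairs `(K, s)`. -/
def dot (g : G) (x : Sig Mf) : Sig Mf := ⟨conjS g x.1, Mf.con g x.1 x.2⟩

theorem dot_one (x : Sig Mf) : dot Mf 1 x = x := Mf.con_id x.1 1 (one_mem _) x.2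

theorem dot_mul (g r : G) (x : Sig Mf) : dot Mf g (dot Mf r x) = dot Mf (g * r) x :=
  Mf.con_mul g r x.1 x.2

/-- `N_H(K,s)`, the stabilizer in `H` of the pair `(K,s)`. -/
def NGpair (H : Subgroup G) (x : Sig Mf) : Subgroup G where
  carrier := {g | g ∈ H ∧ dot Mf g x = x}
  one_mem' := ⟨H.one_mem, dot_one Mf x⟩
  mul_mem' := by
    rintro a b ⟨ha, da⟩ ⟨hb, db⟩
    exact ⟨H.mul_mem ha hb, by rw [← dot_mul, db, da]⟩
  inv_mem' := by
    rintro a ⟨ha, da⟩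
    refine ⟨H.inv_mem ha, ?_⟩
    conv_lhs => rw [← da]
    rw [dot_mul, inv_mul_cancel, dot_one]

/-- A complete set of representatives `R(H,M)` of the `H`-orbits of the set `S(H,M)` of
pairs `(K,s)` with `K ≤ H` and `s ∈ M(K)`. -/
structure Reps (Mf : MonoidFunctor G) (H : Subgroup G) where
  R : Set (Sig Mf)
  subset : ∀ x ∈ R, x.1 ≤ H
  complete : ∀ x : Sig Mf, x.1 ≤ H → ∃! y, y ∈ R ∧ ∃ h ∈ H, dot Mf h x = y

variable {H : Subgroup G}

/-- The coordinate of a tuple indexed by `R(H,M)` at (the orbit of) an arbitrary pair. -/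
def coordAt {A : Type*} [AddCommMonoid A] (R : Reps Mf H) (v : ↥R.R → A) (y : Sig Mf) : A :=
  ∑ᶠ (k : ↥R.R) (_ : ∃ h ∈ H, dot Mf h y = ↑k), v k

/-- The number of cosets `hK ∈ H/K` with `U ≤ ʰK` and `t = res(ʰs)`,
for `x = (K,s)` and `u = (U,t)`. -/
def invCount (H : Subgroup G) (x u : Sig Mf) : ℕ :=
  Nat.card {q : ↥H ⧸ x.1.subgroupOf H //
    ∃ h : ↥H, QuotientGroup.mk h = q ∧
      ∃ hle : u.1 ≤ conjS (h : G) x.1, u.2 = Mf.res hle (Mf.con (h : G) x.1 x.2)}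

/-- The mark morphism `φ_H` in coordinates. -/
def phiM (R : Reps Mf H) (f : ↥R.R → ℤ) : ↥R.R → ℤ :=
  fun u => ∑ᶠ k : ↥R.R, f k * (invCount Mf H k.1 u.1 : ℤ)

/-- `|W_H(K,s)| = |N_H(K,s)/K|`. -/
def WCard (H : Subgroup G) (x : Sig Mf) : ℕ := (x.1.subgroupOf (NGpair Mf H x)).index

/-- The order of a Sylow `p`-subgroup of a group of order `n`; for `p = 0`
(representing `p = ∞`) it is `n` itself. -/
def sylCard (p n : ℕ) : ℕ := if p = 0 then n else p ^ (n.factorization p)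

/-- The multiplicative set `ℤ ∖ (p)` (for `p` prime), resp. the units of `ℤ` (for `p = 0`,
representing `p = ∞`), so that `Localization (locMon p hp)` is `ℤ_(p)`, resp. `ℤ`. -/
def locMon (p : ℕ) (hp : p = 0 ∨ p.Prime) : Submonoid ℤ where
  carrier := {k | if p = 0 then IsUnit k else ¬ (p : ℤ) ∣ k}
  one_mem' := by
    rcases hp with h | h
    · simp [h]
    · simp only [Set.mem_setOf_eq, if_neg h.ne_zero]
      intro hd
      exact h.one_lt.ne' (by exact_mod_cast Int.eq_one_of_dvd_one (by positivity) hd)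
  mul_mem' := by
    intro a b ha hb
    rcases hp with h | h
    · simp only [Set.mem_setOf_eq, if_pos h] at *
      exact ha.mul hb
    · simp only [Set.mem_setOf_eq, if_neg h.ne_zero] at *
      intro hd
      rcases ((Nat.prime_iff_prime_int.mp h).dvd_mul.mp hd) with h1 | h1
      · exact ha h1
      · exact hb h1

/-- `ℤ_(p)` (with `ℤ_(0)` interpreted as `ℤ_(∞) = ℤ`). -/
abbrev Zp (p : ℕ) (hp : p = 0 ∨ p.Prime) := Localization (locMon p hp)


end

universe u v

noncomputable section

variable {G : Type u} [Group G] (Mf : MonoidFunctor G) {H : Subgroup G}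

theorem conjS_le {g : G} {K H : Subgroup G} (hK : K ≤ H) (hg : g ∈ H) : conjS g K ≤ H := by
  intro x hx
  rw [mem_conjS] at hx
  have h2 := H.mul_mem (H.mul_mem hg (hK hx)) (H.inv_mem hg)
  convert h2 using 1
  group

/-- A pair `(J, π)` of a finite `H`-set `J` and a map `π : J → ⊔_{K ≤ H} M(K)`;
the axioms of an element of `T^M_H` are collected in `IsElt` below. -/
structure PreElt (Mf : MonoidFunctor G) (H : Subgroup G) where
  J : Type u
  fin : Finite J
  act : ↥H → J → J
  pi : J → Sig Mf

/-- The stabilizer (as a subset of `G`) of a point of a pre-element. -/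
def stabSet (A : PreElt Mf H) (x : A.J) : Set G :=
  {g | ∃ hg : g ∈ H, A.act ⟨g, hg⟩ x = x}

/-- `(J, π)` is an element of `T^M_H`: the action axioms hold, `π` is `H`-equivariant,
and `π(x) ∈ M(H_x)` where `H_x` is the stabilizer of `x` in `H`. -/
def IsElt (A : PreElt Mf H) : Prop :=
  (∀ x, A.act 1 x = x) ∧
  (∀ (g h : ↥H) (x), A.act (g * h) x = A.act g (A.act h x)) ∧
  (∀ (h : ↥H) (x), A.pi (A.act h x) = dot Mf (h : G) (A.pi x)) ∧
  (∀ x, ((A.pi x).1 : Set G) = stabSet Mf A x)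

/-- `f` is a morphism of elements of `T^M_H`: an `H`-equivariant map with
`π₀(x) = res_{H_x}^{H_{f(x)}}(π(f x))`. -/
def IsMor (A B : PreElt Mf H) (f : A.J → B.J) : Prop :=
  (∀ (h : ↥H) (x), f (A.act h x) = B.act h (f x)) ∧
  (∀ x, ∃ hle : (A.pi x).1 ≤ (B.pi (f x)).1,
    (A.pi x).2 = Mf.res hle ((B.pi (f x)).2))

/-- Two elements of `T^M_H` are isomorphic: there are mutually inverse morphisms
between them. -/
def EltIso (A B : PreElt Mf H) : Prop :=
  ∃ (f : A.J → B.J) (f' : B.J → A.J),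
    (∀ x, f' (f x) = x) ∧ (∀ y, f (f' y) = y) ∧ IsMor Mf A B f ∧ IsMor Mf B A f'

/-- The transitive element `(H/K, π_s)` of `T^M_H`. -/
abbrev transPre [Finite G] (K : Subgroup G) (hK : K ≤ H) (s : Mf.M K) : PreElt Mf H where
  J := ↥H ⧸ K.subgroupOf H
  fin := inferInstance
  act h q := h • q
  pi q := dot Mf ((Quotient.out q : ↥H) : G) ⟨K, s⟩

theorem transPre_isElt [Finite G] (K : Subgroup G) (hK : K ≤ H) (s : Mf.M K) :
    IsElt Mf (transPre Mf K hK s) := by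
  have key : ∀ a b : ↥H,
      (QuotientGroup.mk a : ↥H ⧸ K.subgroupOf H) = QuotientGroup.mk b →
      dot Mf (a : G) ⟨K, s⟩ = dot Mf (b : G) ⟨K, s⟩ := by
    intro a b hab
    have h1 : a⁻¹ * b ∈ K.subgroupOf H := QuotientGroup.eq.mp hab
    rw [Subgroup.mem_subgroupOf] at h1
    have h3 : (b : G) = (a : G) * ((a⁻¹ * b : ↥H) : G) := by push_cast; group
    rw [h3, ← dot_mul,
      show dot Mf ((a⁻¹ * b : ↥H) : G) (⟨K, s⟩ : Sig Mf) = ⟨K, s⟩ from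
        Mf.con_id K _ h1 s]
  refine ⟨fun x => one_smul _ x, fun g h x => mul_smul g h x, ?_, ?_⟩
  · intro h q
    show dot Mf ((Quotient.out (h • q) : ↥H) : G) ⟨K, s⟩
        = dot Mf (h : G) (dot Mf ((Quotient.out q : ↥H) : G) ⟨K, s⟩)
    rw [dot_mul,
      show ((h : G) * ((Quotient.out q : ↥H) : G)) = ((h * Quotient.out q : ↥H) : G)
        from rfl]
    apply key
    rw [QuotientGroup.out_eq']
    conv_lhs => rw [← QuotientGroup.out_eq' q]
    rfl
  · intro q
    show (conjS ((Quotient.out q : ↥H) : G) K : Set G)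
        = stabSet Mf (transPre Mf K hK s) q
    ext g
    constructor
    · intro hg
      have hgH : g ∈ H := conjS_le hK (Quotient.out q).2 hg
      refine ⟨hgH, ?_⟩
      show (⟨g, hgH⟩ : ↥H) • q = q
      conv_lhs => rw [← QuotientGroup.out_eq' q]
      show QuotientGroup.mk ((⟨g, hgH⟩ : ↥H) * Quotient.out q) = q
      conv_rhs => rw [← QuotientGroup.out_eq' q]
      rw [QuotientGroup.eq]
      rw [Subgroup.mem_subgroupOf]
      have h5 : ((Quotient.out q : ↥H) : G)⁻¹ * g * ((Quotient.out q : ↥H) : G) ∈ K :=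
        mem_conjS.mp hg
      have h6 := K.inv_mem h5
      convert h6 using 1
      push_cast
      group
    · rintro ⟨hgH, hfix⟩
      have h7 : (⟨g, hgH⟩ : ↥H) • q = q := hfix
      have h8 : (QuotientGroup.mk ((⟨g, hgH⟩ : ↥H) * Quotient.out q)
          : ↥H ⧸ K.subgroupOf H) = QuotientGroup.mk (Quotient.out q) := by
        rw [QuotientGroup.out_eq']
        conv_lhs => rw [show (QuotientGroup.mk ((⟨g, hgH⟩ : ↥H) * Quotient.out q)
          : ↥H ⧸ K.subgroupOf H) = (⟨g, hgH⟩ : ↥H) • q from by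
            conv_rhs => rw [← QuotientGroup.out_eq' q]
            rfl]
        exact h7
      have h9 := QuotientGroup.eq.mp h8
      rw [Subgroup.mem_subgroupOf] at h9
      have h10 := K.inv_mem h9
      rw [SetLike.mem_coe, mem_conjS]
      convert h10 using 1
      push_cast
      group

/-- The disjoint union of two pre-elements. -/
abbrev disjPre (A B : PreElt Mf H) : PreElt Mf H where
  J := A.J ⊕ B.J
  fin := by have := A.fin; have := B.fin; exact inferInstance
  act h := Sum.map (A.act h) (B.act h)
  pi := Sum.elim A.pi B.pi

theorem disjPre_isElt {A B : PreElt Mf H} (hA : IsElt Mf A) (hB : IsElt Mf B) :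
    IsElt Mf (disjPre Mf A B) := by
  refine ⟨?_, ?_, ?_, ?_⟩
  · rintro (x | x) <;> simp [hA.1, hB.1]
  · intro g h
    rintro (x | x) <;> simp [hA.2.1, hB.2.1]
  · intro h
    rintro (x | x) <;> simp [hA.2.2.1, hB.2.2.1]
  · rintro (x | x)
    · rw [show (disjPre Mf A B).pi (Sum.inl x) = A.pi x from rfl, hA.2.2.2 x]
      ext g
      simp only [stabSet, Set.mem_setOf_eq]
      constructor
      · rintro ⟨hg, hx⟩
        exact ⟨hg, by simp [hx]⟩
      · rintro ⟨hg, hx⟩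
        refine ⟨hg, ?_⟩
        simpa using hx
    · rw [show (disjPre Mf A B).pi (Sum.inr x) = B.pi x from rfl, hB.2.2.2 x]
      ext g
      simp only [stabSet, Set.mem_setOf_eq]
      constructor
      · rintro ⟨hg, hx⟩
        exact ⟨hg, by simp [hx]⟩
      · rintro ⟨hg, hx⟩
        refine ⟨hg, ?_⟩
        simpa using hx

/-- The elements of `T^M_H`. -/
def EltT (Mf : MonoidFunctor G) (H : Subgroup G) := {A : PreElt Mf H // IsElt Mf A}

/-- The isomorphism relation on elements of `T^M_H`. -/
def isoRel (A B : EltT Mf H) : Prop := EltIso Mf A.1 B.1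

/-- The isomorphism classes `[J, π]` of elements of `T^M_H`. -/
def Cl (Mf : MonoidFunctor G) (H : Subgroup G) := Quot (isoRel Mf (H := H))

/-- The `M`-Burnside ring `Ω(H,M)` as an additive group: the free abelian group on the
isomorphism classes of elements of `T^M_H`, with `[J₁ ⊔ J₂, π₁ ⊔ π₂] = [J₁,π₁] + [J₂,π₂]`. -/
def OmegaGr (Mf : MonoidFunctor G) (H : Subgroup G) :=
  (Cl Mf H →₀ ℤ) ⧸ AddSubgroup.closure
    {z | ∃ A B : EltT Mf H, z =
      Finsupp.single (Quot.mk _ (⟨disjPre Mf A.1 B.1, disjPre_isElt Mf A.2 B.2⟩ : EltT Mf H)) 1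
      - Finsupp.single (Quot.mk _ A) 1 - Finsupp.single (Quot.mk _ B) 1}

instance : AddCommGroup (OmegaGr Mf H) :=
  QuotientAddGroup.Quotient.addCommGroup _

/-- The class `[(H/K)_s] ∈ Ω(H,M)` indexed by `(K,s) ∈ R(H,M)`. -/
def transCls [Finite G] (R : Reps Mf H) (k : ↥R.R) : OmegaGr Mf H :=
  QuotientAddGroup.mk (Finsupp.single (Quot.mk _
    (⟨transPre Mf k.1.1 (R.subset k.1 k.2) k.1.2,
      transPre_isElt Mf k.1.1 (R.subset k.1 k.2) k.1.2⟩ : EltT Mf H)) 1)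


/-! An isomorphism in `T^M_H` matches stabilizers, hence preserves the labels `π(x)`; on `H/K`
the labels run through the `H`-orbit of `(K,s)`, which gives the first part. Every element of
`T^M_H` is the disjoint union of its `H`-orbits, and the orbit of `x` is isomorphic to
`(H/K)_s` with `(K,s) = π(x)`, so the transitive classes span `Ω(H,M)`. Counting, for each
`(K,s) ∈ R(H,M)`, the points whose label lies in the orbit of `(K,s)` is additive and invariant
under isomorphism, so it defines a homomorphism `Ω(H,M) → ℤ^(R(H,M))`; it sends `[(H/K)_s]` to
`|H : K| • e_(K,s)`, and these are independent. -/

variable {Mf}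

attribute [instance] PreElt.fin

theorem dot_inv_dot (g : G) (x : Sig Mf) : dot Mf g⁻¹ (dot Mf g x) = x := by
  rw [dot_mul, inv_mul_cancel, dot_one]

theorem exists_res_eq_of_eq {x y : Sig Mf} (h : x = y) :
    ∃ hle : x.1 ≤ y.1, x.2 = Mf.res hle y.2 := by
  subst h
  exact ⟨le_rfl, (Mf.res_self _ _).symm⟩

theorem eq_of_res_eq {x y : Sig Mf} (hle : x.1 ≤ y.1) (hge : y.1 ≤ x.1)
    (h : x.2 = Mf.res hle y.2) : x = y := by
  obtain ⟨K, s⟩ := x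
  obtain ⟨U, t⟩ := y
  obtain rfl : K = U := le_antisymm hle hge
  dsimp only at h
  rw [h, Mf.res_self]

namespace IsElt

variable {A : PreElt Mf H} (hA : IsElt Mf A)
include hA

theorem act_one (x : A.J) : A.act 1 x = x := hA.1 x

theorem act_mul (g h : ↥H) (x : A.J) : A.act (g * h) x = A.act g (A.act h x) :=
  hA.2.1 g h x

theorem pi_act (h : ↥H) (x : A.J) : A.pi (A.act h x) = dot Mf h (A.pi x) := hA.2.2.1 h x

theorem act_inv_act (h : ↥H) (x : A.J) : A.act h⁻¹ (A.act h x) = x := by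
  rw [← hA.act_mul, inv_mul_cancel, hA.act_one]

theorem act_eq_self_iff (k : ↥H) (x : A.J) : A.act k x = x ↔ (k : G) ∈ (A.pi x).1 := by
  rw [← SetLike.mem_coe, hA.2.2.2 x]
  exact ⟨fun hk => ⟨k.2, hk⟩, fun ⟨_, hk⟩ => hk⟩

theorem pi_fst_le (x : A.J) : (A.pi x).1 ≤ H := fun g hg => by
  rw [← SetLike.mem_coe, hA.2.2.2 x] at hg
  exact hg.1

theorem act_eq_act_iff (a b : ↥H) (x : A.J) :
    A.act a x = A.act b x ↔ ((a⁻¹ * b : ↥H) : G) ∈ (A.pi x).1 := by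
  rw [← hA.act_eq_self_iff, hA.act_mul]
  constructor
  · intro h
    rw [← h, hA.act_inv_act]
  · intro h
    nth_rewrite 1 [← h]
    rw [← hA.act_mul, mul_inv_cancel, hA.act_one]

end IsElt

theorem eltIso_iff {A B : PreElt Mf H} :
    EltIso Mf A B ↔ ∃ e : A.J ≃ B.J,
      (∀ (h : ↥H) (x : A.J), e (A.act h x) = B.act h (e x)) ∧ ∀ x, B.pi (e x) = A.pi x := by
  constructor
  · rintro ⟨f, f', hf'f, hff', hf, hf'⟩
    refine ⟨⟨f, f', hf'f, hff'⟩, hf.1, fun x => ?_⟩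
    obtain ⟨hle, hres⟩ := hf.2 x
    -- the morphism back to `x` gives the reverse inclusion of stabilizers
    obtain ⟨hge, -⟩ := hf'.2 (f x)
    rw [hf'f] at hge
    exact (eq_of_res_eq hle hge hres).symm
  · rintro ⟨e, he, hpi⟩
    refine ⟨e, e.symm, e.symm_apply_apply, e.apply_symm_apply,
      ⟨he, fun x => exists_res_eq_of_eq (hpi x).symm⟩, ⟨fun h y => ?_, fun y => ?_⟩⟩
    · rw [e.symm_apply_eq, he, e.apply_symm_apply]
    · exact exists_res_eq_of_eq (by rw [← hpi, e.apply_symm_apply])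

theorem EltIso.trans {A B C : PreElt Mf H} (hAB : EltIso Mf A B) (hBC : EltIso Mf B C) :
    EltIso Mf A C := by
  obtain ⟨e, he, hpi⟩ := eltIso_iff.mp hAB
  obtain ⟨e', he', hpi'⟩ := eltIso_iff.mp hBC
  exact eltIso_iff.mpr ⟨e.trans e', fun h x => by simp [he, he'], fun x => by simp [hpi, hpi']⟩

section Transitive

variable [Finite G] {K U : Subgroup G}

theorem transPre_pi_mk (hK : K ≤ H) (s : Mf.M K) (a : ↥H) :
    (transPre Mf K hK s).pi (QuotientGroup.mk a) = dot Mf a ⟨K, s⟩ := by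
  obtain ⟨k, hk⟩ := QuotientGroup.mk_out_eq_mul (K.subgroupOf H) a
  show dot Mf ((QuotientGroup.mk a : ↥H ⧸ K.subgroupOf H).out : G) ⟨K, s⟩ = _
  rw [hk, Subgroup.coe_mul, ← dot_mul,
    show dot Mf ((k : ↥H) : G) ⟨K, s⟩ = ⟨K, s⟩ from Mf.con_id K _ k.2 s]

theorem eltIso_transPre_of_transitive {A : PreElt Mf H} (hA : IsElt Mf A) (hK : K ≤ H)
    {s : Mf.M K} {x : A.J} (hx : A.pi x = ⟨K, s⟩)
    (htrans : ∀ y, ∃ k : ↥H, A.act k x = y) :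
    EltIso Mf (transPre Mf K hK s) A := by
  have act_eq_act (a b : ↥H) :
      A.act a x = A.act b x ↔
        (QuotientGroup.mk a : ↥H ⧸ K.subgroupOf H) = QuotientGroup.mk b := by
    rw [QuotientGroup.eq, Subgroup.mem_subgroupOf, hA.act_eq_act_iff, hx]
  let f : ↥H ⧸ K.subgroupOf H → A.J := fun q => A.act q.out x
  have f_mk : ∀ a : ↥H, f (QuotientGroup.mk a) = A.act a x := fun a =>
    (act_eq_act _ _).mpr (QuotientGroup.out_eq' _)
  have f_bij : f.Bijective := by
    refine ⟨fun q q' hqq' => ?_, fun y => ?_⟩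
    · induction q using QuotientGroup.induction_on
      induction q' using QuotientGroup.induction_on
      rwa [f_mk, f_mk, act_eq_act] at hqq'
    · obtain ⟨k, rfl⟩ := htrans y
      exact ⟨QuotientGroup.mk k, f_mk k⟩
  refine eltIso_iff.mpr ⟨Equiv.ofBijective f f_bij, fun h q => ?_, fun q => ?_⟩
  · induction q using QuotientGroup.induction_on
    simp only [Equiv.ofBijective_apply, MulAction.Quotient.smul_mk, f_mk, smul_eq_mul,
      hA.act_mul]
  · simp only [Equiv.ofBijective_apply, f, hA.pi_act, hx]

theorem eltIso_transPre_of_conj (hK : K ≤ H) (hU : U ≤ H) {s : Mf.M K} {t : Mf.M U} {h : G}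
    (hH : h ∈ H) (hd : dot Mf h ⟨U, t⟩ = ⟨K, s⟩) :
    EltIso Mf (transPre Mf K hK s) (transPre Mf U hU t) := by
  refine eltIso_transPre_of_transitive (transPre_isElt Mf U hU t) hK
    (x := QuotientGroup.mk ⟨h, hH⟩) (by rw [transPre_pi_mk, ← hd]) fun q => ?_
  induction q using QuotientGroup.induction_on with
  | H a =>
    refine ⟨a * ⟨h, hH⟩⁻¹, ?_⟩
    show (a * ⟨h, hH⟩⁻¹) • (QuotientGroup.mk ⟨h, hH⟩ : ↥H ⧸ U.subgroupOf H)
      = QuotientGroup.mk a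
    rw [MulAction.Quotient.smul_mk, smul_eq_mul, inv_mul_cancel_right]

theorem conj_of_eltIso_transPre (hK : K ≤ H) (hU : U ≤ H) {s : Mf.M K} {t : Mf.M U}
    (hiso : EltIso Mf (transPre Mf K hK s) (transPre Mf U hU t)) :
    ∃ h ∈ H, dot Mf h ⟨U, t⟩ = ⟨K, s⟩ := by
  obtain ⟨e, -, hpi⟩ := eltIso_iff.mp hiso
  obtain ⟨b, hb⟩ := QuotientGroup.mk_surjective (e (QuotientGroup.mk 1))
  have hlabel := hpi (QuotientGroup.mk 1)
  rw [← hb, transPre_pi_mk, transPre_pi_mk, OneMemClass.coe_one, dot_one] at hlabel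
  exact ⟨b, b.2, hlabel⟩

theorem eltIso_transPre_iff (hK : K ≤ H) (hU : U ≤ H) (s : Mf.M K) (t : Mf.M U) :
    EltIso Mf (transPre Mf K hK s) (transPre Mf U hU t) ↔
      ∃ h ∈ H, dot Mf h ⟨U, t⟩ = ⟨K, s⟩ :=
  ⟨conj_of_eltIso_transPre hK hU, fun ⟨_, hH, hd⟩ => eltIso_transPre_of_conj hK hU hH hd⟩

end Transitive

namespace PreElt

def IsInvariant (A : PreElt Mf H) (S : Set A.J) : Prop :=
  ∀ (h : ↥H) (x : A.J), x ∈ S → A.act h x ∈ S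

def orbit (A : PreElt Mf H) (x : A.J) : Set A.J := {y | ∃ k : ↥H, A.act k x = y}

def restr (A : PreElt Mf H) (S : Set A.J) (hS : A.IsInvariant S) : PreElt Mf H where
  J := ↥S
  fin := inferInstance
  act h x := ⟨A.act h x, hS h x x.2⟩
  pi x := A.pi x

end PreElt

namespace IsElt

variable {A : PreElt Mf H} (hA : IsElt Mf A)
include hA

theorem isInvariant_orbit (x : A.J) : A.IsInvariant (A.orbit x) := by
  rintro h _ ⟨k, rfl⟩
  exact ⟨h * k, hA.act_mul h k x⟩

theorem isInvariant_compl {S : Set A.J} (hS : A.IsInvariant S) : A.IsInvariant Sᶜ :=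
  fun h x hx hhx => hx (hA.act_inv_act h x ▸ hS h⁻¹ _ hhx)

theorem restr {S : Set A.J} (hS : A.IsInvariant S) : IsElt Mf (A.restr S hS) := by
  refine ⟨fun x => Subtype.ext (hA.act_one x.1), fun g h x => Subtype.ext (hA.act_mul g h x.1),
    fun h x => hA.pi_act h x.1, fun x => ?_⟩
  show ((A.pi x.1).1 : Set G) = stabSet Mf (A.restr S hS) x
  rw [hA.2.2.2 x.1]
  ext g
  exact exists_congr fun _ => ⟨fun h => Subtype.ext h, congrArg Subtype.val⟩

theorem eltIso_disjPre_restr {S : Set A.J} (hS : A.IsInvariant S) :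
    EltIso Mf (disjPre Mf (A.restr S hS) (A.restr Sᶜ (hA.isInvariant_compl hS))) A :=
  eltIso_iff.mpr
    ⟨Equiv.sumCompl (· ∈ S), by rintro h (x | x) <;> rfl, by rintro (x | x) <;> rfl⟩

theorem eltIso_transPre_restr_orbit [Finite G] (x : A.J) :
    EltIso Mf (transPre Mf (A.pi x).1 (hA.pi_fst_le x) (A.pi x).2)
      (A.restr (A.orbit x) (hA.isInvariant_orbit x)) :=
  eltIso_transPre_of_transitive (hA.restr _) _ (x := ⟨x, 1, hA.act_one x⟩) rfl
    (by rintro ⟨_, k, rfl⟩; exact ⟨k, rfl⟩)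

end IsElt

def cls (A : EltT Mf H) : OmegaGr Mf H :=
  QuotientAddGroup.mk (Finsupp.single (Quot.mk _ A) 1)

theorem cls_eq_of_eltIso {A B : EltT Mf H} (h : EltIso Mf A.1 B.1) : cls A = cls B :=
  congrArg (fun c : Cl Mf H => (QuotientAddGroup.mk (Finsupp.single c 1) : OmegaGr Mf H))
    (Quot.sound h)

theorem cls_disjPre (A B : EltT Mf H) :
    cls ⟨disjPre Mf A.1 B.1, disjPre_isElt Mf A.2 B.2⟩ = cls A + cls B := by
  rw [← sub_eq_zero, ← sub_sub]
  exact (QuotientAddGroup.eq_zero_iff _).mpr (AddSubgroup.subset_closure ⟨A, B, rfl⟩)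

theorem mk_single_eq_zsmul_cls (A : EltT Mf H) (n : ℤ) :
    (QuotientAddGroup.mk (Finsupp.single (Quot.mk _ A : Cl Mf H) n) : OmegaGr Mf H) = n • cls A :=
  congrArg QuotientAddGroup.mk (Finsupp.smul_single_one _ n).symm

theorem cls_eq_zero_of_isEmpty (A : EltT Mf H) [IsEmpty A.1.J] : cls A = 0 := by
  have hiso : EltIso Mf (disjPre Mf A.1 A.1) A.1 :=
    eltIso_iff.mpr ⟨Equiv.equivOfIsEmpty _ _, fun _ x => isEmptyElim x, fun x => isEmptyElim x⟩
  have h := cls_disjPre A A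
  rwa [cls_eq_of_eltIso (A := ⟨_, disjPre_isElt Mf A.2 A.2⟩) (B := A) hiso, left_eq_add] at h

section Representatives

variable (R : Reps Mf H)

def repOf (x : Sig Mf) (hx : x.1 ≤ H) : ↥R.R :=
  ⟨_, (R.complete x hx).exists.choose_spec.1⟩

theorem repOf_spec (x : Sig Mf) (hx : x.1 ≤ H) : ∃ h ∈ H, dot Mf h x = repOf R x hx :=
  (R.complete x hx).exists.choose_spec.2

theorem repOf_eq_of_conj {x y : Sig Mf} (hx : x.1 ≤ H) (hy : y ∈ R.R)
    (hxy : ∃ h ∈ H, dot Mf h x = y) : repOf R x hx = ⟨y, hy⟩ :=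
  Subtype.ext <| (R.complete x hx).unique ⟨(repOf R x hx).2, repOf_spec R x hx⟩ ⟨hy, hxy⟩

theorem repOf_congr {x y : Sig Mf} (e : x = y) (hx : x.1 ≤ H) (hy : y.1 ≤ H) :
    repOf R x hx = repOf R y hy := by
  subst e
  rfl

end Representatives

section Span

variable (R : Reps Mf H) [Finite G]

theorem cls_restr_orbit {A : EltT Mf H} (x : A.1.J) :
    cls ⟨A.1.restr (A.1.orbit x) (A.2.isInvariant_orbit x), A.2.restr _⟩
      = transCls Mf R (repOf R (A.1.pi x) (A.2.pi_fst_le x)) := by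
  set k := repOf R (A.1.pi x) (A.2.pi_fst_le x)
  obtain ⟨h, hH, hd⟩ := repOf_spec R (A.1.pi x) (A.2.pi_fst_le x)
  have hiso : EltIso Mf (transPre Mf k.1.1 (R.subset _ k.2) k.1.2)
      (transPre Mf (A.1.pi x).1 (A.2.pi_fst_le x) (A.1.pi x).2) :=
    eltIso_transPre_of_conj _ _ hH hd
  exact (cls_eq_of_eltIso (hiso.trans (A.2.eltIso_transPre_restr_orbit x))).symm

theorem cls_mem_span_transCls (A : EltT Mf H) :
    cls A ∈ Submodule.span ℤ (Set.range (transCls Mf R)) := by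
  induction hn : Nat.card A.1.J using Nat.strong_induction_on generalizing A with
  | _ n ih =>
    cases isEmpty_or_nonempty A.1.J with
    | inl hempty => rw [cls_eq_zero_of_isEmpty]; exact zero_mem _
    | inr hne =>
      obtain ⟨x⟩ := hne
      have hS := A.2.isInvariant_orbit x
      have hSc := A.2.isInvariant_compl hS
      have hsplit : cls A = cls ⟨_, A.2.restr hS⟩ + cls ⟨_, A.2.restr hSc⟩ := by
        rw [← cls_disjPre ⟨_, A.2.restr hS⟩ ⟨_, A.2.restr hSc⟩]
        exact (cls_eq_of_eltIso (A.2.eltIso_disjPre_restr hS)).symm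
      have hcard : Nat.card ↥(A.1.orbit x)ᶜ < n :=
        hn ▸ Finite.card_subtype_lt (p := (· ∈ (A.1.orbit x)ᶜ))
          (not_not.mpr ⟨1, A.2.act_one x⟩)
      rw [hsplit, cls_restr_orbit]
      exact add_mem (Submodule.subset_span ⟨_, rfl⟩) (ih _ hcard _ rfl)

theorem span_transCls_eq_top : Submodule.span ℤ (Set.range (transCls Mf R)) = ⊤ := by
  rw [eq_top_iff]
  rintro y -
  obtain ⟨f, rfl⟩ := QuotientAddGroup.mk_surjective y
  induction f using Finsupp.induction_linear with
  | zero => exact zero_mem _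
  | add f g hf hg => rw [QuotientAddGroup.mk_add]; exact add_mem hf hg
  | single c n =>
    obtain ⟨A, rfl⟩ := Quot.exists_rep c
    have h := Submodule.smul_mem _ n (cls_mem_span_transCls R A)
    rwa [← mk_single_eq_zsmul_cls] at h

end Span

section Independence

variable (R : Reps Mf H)

def weight (A : PreElt Mf H) (hA : IsElt Mf A) : ↥R.R →₀ ℤ :=
  ∑ᶠ x : A.J, Finsupp.single (repOf R (A.pi x) (hA.pi_fst_le x)) 1

theorem weight_eq_of_eltIso {A B : PreElt Mf H} (hA : IsElt Mf A) (hB : IsElt Mf B)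
    (h : EltIso Mf A B) : weight R A hA = weight R B hB := by
  obtain ⟨e, -, hpi⟩ := eltIso_iff.mp h
  rw [weight, weight, ← finsum_comp_equiv e]
  exact finsum_congr fun x => by rw [repOf_congr R (hpi x) _ (hA.pi_fst_le x)]

theorem weight_disjPre {A B : PreElt Mf H} (hA : IsElt Mf A) (hB : IsElt Mf B) :
    weight R (disjPre Mf A B) (disjPre_isElt Mf hA hB) = weight R A hA + weight R B hB := by
  have := Fintype.ofFinite A.J
  have := Fintype.ofFinite B.J
  simp only [weight, finsum_eq_sum_of_fintype, Fintype.sum_sum_type]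
  rfl

theorem weight_transPre [Finite G] (k : ↥R.R) :
    weight R (transPre Mf k.1.1 (R.subset _ k.2) k.1.2) (transPre_isElt Mf _ _ _)
      = Finsupp.single k ((k.1.1.subgroupOf H).index : ℤ) := by
  have hlabel : ∀ q, repOf R ((transPre Mf k.1.1 (R.subset _ k.2) k.1.2).pi q)
      ((transPre_isElt Mf _ _ _).pi_fst_le q) = k := fun q =>
    repOf_eq_of_conj R _ k.2 ⟨_, H.inv_mem q.out.2, dot_inv_dot _ _⟩
  have := Fintype.ofFinite (↥H ⧸ k.1.1.subgroupOf H)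
  simp only [weight, hlabel, finsum_eq_sum_of_fintype, Finset.sum_const, Finset.card_univ,
    Subgroup.index, Nat.card_eq_fintype_card, Finsupp.smul_single, nsmul_eq_mul, mul_one]

def weightFree : (Cl Mf H →₀ ℤ) →+ (↥R.R →₀ ℤ) :=
  Finsupp.liftAddHom fun c => zmultiplesHom _ <|
    Quot.lift (fun A : EltT Mf H => weight R A.1 A.2)
      (fun A B h => weight_eq_of_eltIso R A.2 B.2 h) c

theorem weightFree_single (A : EltT Mf H) :
    weightFree R (Finsupp.single (Quot.mk _ A) 1) = weight R A.1 A.2 := by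
  erw [weightFree, Finsupp.liftAddHom_apply_single]
  exact one_smul ℤ _

theorem weightFree_disjPre_sub (A B : EltT Mf H) :
    weightFree R ((Finsupp.single (Quot.mk _ ⟨_, disjPre_isElt Mf A.2 B.2⟩ : Cl Mf H) 1
      - Finsupp.single (Quot.mk _ A) 1 - Finsupp.single (Quot.mk _ B) 1)) = 0 := by
  erw [map_sub, map_sub, weightFree_single, weightFree_single, weightFree_single]
  rw [weight_disjPre R A.2 B.2, sub_sub, sub_self]

def weightHom : OmegaGr Mf H →+ (↥R.R →₀ ℤ) :=
  QuotientAddGroup.lift _ (weightFree R) <| (AddSubgroup.closure_le _).mpr <| by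
    rintro _ ⟨A, B, rfl⟩
    exact weightFree_disjPre_sub R A B

theorem weightHom_cls (A : EltT Mf H) : weightHom R (cls A) = weight R A.1 A.2 :=
  weightFree_single R A

theorem linearIndependent_transCls [Finite G] : LinearIndependent ℤ (transCls Mf R) := by
  refine LinearIndependent.of_comp (weightHom R).toIntLinearMap ?_
  have h : ⇑(weightHom R).toIntLinearMap ∘ transCls Mf R
      = fun k => Finsupp.single k ((k.1.1.subgroupOf H).index : ℤ) :=
    funext fun k => (weightHom_cls R _).trans (weight_transPre R k)
  rw [h]
  exact Finsupp.linearIndependent_single_of_ne_zero fun k => by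
    exact_mod_cast Subgroup.index_ne_zero_of_finite

end Independence

/-- For `(K,s), (U,t) ∈ S(H,M)`, the elements `(H/K, π_s)` and
`(H/U, π_t)` of `T^M_H` are isomorphic if and only if `(K,s) = h.(U,t)` for some
`h ∈ H`; consequently the classes `[(H/K)_s]` for `(K,s) ∈ R(H,M)` form a `ℤ`-basis of
the `M`-Burnside ring `Ω(H,M)`. -/
theorem trans_iso_iff_and_basis [Finite G] :
    (∀ (K U : Subgroup G) (hK : K ≤ H) (hU : U ≤ H) (s : Mf.M K) (t : Mf.M U),
      EltIso Mf (transPre Mf K hK s) (transPre Mf U hU t) ↔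
        ∃ h ∈ H, dot Mf h ⟨U, t⟩ = ⟨K, s⟩) ∧
    (∀ R : Reps Mf H,
      LinearIndependent ℤ (transCls Mf R) ∧
      Submodule.span ℤ (Set.range (transCls Mf R)) = ⊤) :=
  ⟨fun _ _ hK hU s t => eltIso_transPre_iff hK hU s t,
    fun R => ⟨linearIndependent_transCls R, span_transCls_eq_top R⟩⟩

end
end LB
end

section
/- Let G be a finite group, M a monoid functor for G, and H ≤ G. Then Ω̃(H,M) = ⊕_{(U,t)∈R(H,M)} (1/|W_H(U,t)|)·φ_H([(H/U)_t])·Z; that is, the elements (1/|W_H(U,t)|)φ_H([(H/U)_t]) for (U,t) ∈ R(H,M) lie in Ω̃(H,M) and form a free Z-basis of it. -/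
/-!
`|K| · φ_H([(H/K)_s])_{(U,t)}` counts the `h ∈ H` with `U ≤ ʰK` and `t = res(ʰs)`; this condition is
invariant under right multiplication by `N_H(K,s)`, so the count is divisible by `|N_H(K,s)|`
and the mark by `|W_H(K,s)|`. The mark is nonzero only if `|U| ≤ |K|`, and when `|U| = |K|` only
if `(U,t)` is conjugate to `(K,s)`, where it equals `|W_H(K,s)|`. So, ordered by decreasing `|K|`,
the scaled marks form a unitriangular integer matrix, whose rows are a `ℤ`-basis.
-/

set_option linter.unusedSectionVars false
set_option linter.unusedVariables false

open scoped Classical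

namespace LB
noncomputable section

variable {G : Type*} [Group G]

variable (Mf : MonoidFunctor G)

variable {H : Subgroup G}

theorem _root_.Matrix.BlockTriangular.det_eq_one {m α R : Type*} [Fintype m] [DecidableEq m]
    [LinearOrder α] [CommRing R] {M : Matrix m m R} {b : m → α} (hM : M.BlockTriangular b)
    (hdiag : ∀ i, M i i = 1) (hblock : ∀ i j, i ≠ j → b i = b j → M i j = 0) : M.det = 1 := by
  rw [hM.det]
  refine Finset.prod_eq_one fun a _ => ?_
  suffices M.toSquareBlock b a = 1 by rw [this, Matrix.det_one]
  ext ⟨i, hi⟩ ⟨j, hj⟩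
  by_cases hij : i = j
  · subst hij
    simp [Matrix.toSquareBlock_def, hdiag]
  · simp [Matrix.toSquareBlock_def, hblock i j hij (hi.trans hj.symm), hij]

theorem _root_.QuotientGroup.card_subtype_eq_card_mul_card_quotient {Γ : Type*} [Group Γ]
    (S : Subgroup Γ) {P : Γ → Prop} (hP : ∀ h, ∀ s ∈ S, P (h * s) ↔ P h) :
    Nat.card {h // P h} = Nat.card S * Nat.card {q : Γ ⧸ S // ∃ h : Γ, (h : Γ ⧸ S) = q ∧ P h} := by
  have hpre : QuotientGroup.mk ⁻¹' {q : Γ ⧸ S | ∃ h : Γ, (h : Γ ⧸ S) = q ∧ P h} = {h | P h} := by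
    ext h
    refine ⟨fun ⟨h', hh', hP'⟩ => ?_, fun hPh => ⟨h, rfl, hPh⟩⟩
    have hs : h'⁻¹ * h ∈ S := QuotientGroup.eq.mp hh'
    simpa [hP'] using hP h' _ hs
  have hcard := QuotientGroup.card_preimage_mk S {q : Γ ⧸ S | ∃ h : Γ, (h : Γ ⧸ S) = q ∧ P h}
  rwa [hpre] at hcard

theorem card_conjS (g : G) (K : Subgroup G) : Nat.card (conjS g K) = Nat.card K :=
  Nat.card_congr (K.equivMapOfInjective _ (MulAut.conj g).injective).toEquiv.symm

def IsRestriction (u x : Sig Mf) : Prop :=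
  ∃ hle : u.1 ≤ x.1, u.2 = Mf.res hle x.2

variable {Mf}

theorem isRestriction_refl (x : Sig Mf) : IsRestriction Mf x x :=
  ⟨le_rfl, (Mf.res_self x.1 x.2).symm⟩

theorem IsRestriction.card_le [Finite G] {u x : Sig Mf} (h : IsRestriction Mf u x) :
    Nat.card u.1 ≤ Nat.card x.1 :=
  Subgroup.card_le_of_le h.1

theorem IsRestriction.eq_of_card_le [Finite G] {u x : Sig Mf} (h : IsRestriction Mf u x)
    (hcard : Nat.card x.1 ≤ Nat.card u.1) : u = x := by
  obtain ⟨U, t⟩ := u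
  obtain ⟨K, s⟩ := x
  obtain ⟨hle, ht⟩ := h
  obtain rfl : U = K := Subgroup.eq_of_le_of_card_ge hle hcard
  dsimp only at ht
  rw [ht, Mf.res_self]

theorem isRestriction_dot_self_iff [Finite G] {g : G} {x : Sig Mf} :
    IsRestriction Mf x (dot Mf g x) ↔ dot Mf g x = x :=
  ⟨fun h => (h.eq_of_card_le (card_conjS g x.1).le).symm,
    fun h => by rw [h]; exact isRestriction_refl x⟩

theorem dot_eq_self_of_mem {x : Sig Mf} {g : G} (hg : g ∈ x.1) : dot Mf g x = x :=
  Mf.con_id x.1 g hg x.2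

variable (Mf)

theorem invCount_eq_card_quotient (x u : Sig Mf) :
    invCount Mf H x u = Nat.card {q : ↥H ⧸ x.1.subgroupOf H //
      ∃ h : ↥H, (h : ↥H ⧸ x.1.subgroupOf H) = q ∧ IsRestriction Mf u (dot Mf h x)} :=
  rfl

theorem card_isRestriction_dot (x u : Sig Mf) (S : Subgroup H)
    (hS : ∀ s ∈ S, dot Mf (s : G) x = x) :
    Nat.card {h : ↥H // IsRestriction Mf u (dot Mf h x)} = Nat.card S *
      Nat.card {q : ↥H ⧸ S // ∃ h : ↥H, (h : ↥H ⧸ S) = q ∧ IsRestriction Mf u (dot Mf h x)} := by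
  refine QuotientGroup.card_subtype_eq_card_mul_card_quotient S fun h s hs => ?_
  rw [Subgroup.coe_mul, ← dot_mul, hS s hs]

theorem card_mul_invCount {x : Sig Mf} (hx : x.1 ≤ H) (u : Sig Mf) :
    Nat.card x.1 * invCount Mf H x u = Nat.card {h : ↥H // IsRestriction Mf u (dot Mf h x)} := by
  rw [card_isRestriction_dot Mf x u (x.1.subgroupOf H)
    (fun s hs => dot_eq_self_of_mem (Subgroup.mem_subgroupOf.mp hs)),
    Nat.card_congr (Subgroup.subgroupOfEquivOfLe hx).toEquiv, invCount_eq_card_quotient]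

theorem card_mul_wCard {x : Sig Mf} (hx : x.1 ≤ H) :
    Nat.card x.1 * WCard Mf H x = Nat.card (NGpair Mf H x) := by
  have hxN : x.1 ≤ NGpair Mf H x := fun g hg => ⟨hx hg, dot_eq_self_of_mem hg⟩
  rw [WCard, mul_comm, ← (x.1.subgroupOf (NGpair Mf H x)).index_mul_card,
    Nat.card_congr (Subgroup.subgroupOfEquivOfLe hxN).toEquiv]

theorem wCard_dvd_invCount [Finite G] {x : Sig Mf} (hx : x.1 ≤ H) (u : Sig Mf) :
    WCard Mf H x ∣ invCount Mf H x u := by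
  have hNH : NGpair Mf H x ≤ H := fun g hg => hg.1
  have hcount := card_isRestriction_dot Mf x u ((NGpair Mf H x).subgroupOf H)
    (fun s hs => (Subgroup.mem_subgroupOf.mp hs).2)
  rw [← card_mul_invCount Mf hx, Nat.card_congr (Subgroup.subgroupOfEquivOfLe hNH).toEquiv,
    ← card_mul_wCard Mf hx, mul_assoc] at hcount
  exact Dvd.intro _ (Nat.eq_of_mul_eq_mul_left Nat.card_pos hcount).symm

theorem invCount_self [Finite G] {x : Sig Mf} (hx : x.1 ≤ H) :
    invCount Mf H x x = WCard Mf H x := by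
  have hcount : Nat.card {h : ↥H // IsRestriction Mf x (dot Mf h x)} = Nat.card (NGpair Mf H x) :=
    Nat.card_congr
      { toFun := fun h => ⟨h.1, h.1.2, isRestriction_dot_self_iff.mp h.2⟩
        invFun := fun g => ⟨⟨g, g.2.1⟩, isRestriction_dot_self_iff.mpr g.2.2⟩
        left_inv := fun _ => rfl
        right_inv := fun _ => rfl }
  rw [← card_mul_invCount Mf hx, ← card_mul_wCard Mf hx] at hcount
  exact Nat.eq_of_mul_eq_mul_left Nat.card_pos hcount

theorem exists_isRestriction_dot_of_invCount_ne_zero {x u : Sig Mf}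
    (hne : invCount Mf H x u ≠ 0) : ∃ h ∈ H, IsRestriction Mf u (dot Mf h x) := by
  obtain ⟨⟨_, h, -, hres⟩⟩ := (Nat.card_ne_zero.mp hne).1
  exact ⟨h, h.2, hres⟩

/-- The entries `|W_H(K,s)|⁻¹ φ_H([(H/K)_s])_{(U,t)}`; the ℕ-division is exact by
`wCard_dvd_invCount`. -/
def scaledMark (H : Subgroup G) (x u : Sig Mf) : ℕ := invCount Mf H x u / WCard Mf H x

theorem wCard_mul_scaledMark [Finite G] {x : Sig Mf} (hx : x.1 ≤ H) (u : Sig Mf) :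
    WCard Mf H x * scaledMark Mf H x u = invCount Mf H x u :=
  Nat.mul_div_cancel' (wCard_dvd_invCount Mf hx u)

theorem scaledMark_self [Finite G] {x : Sig Mf} (hx : x.1 ≤ H) : scaledMark Mf H x x = 1 := by
  rw [scaledMark, invCount_self Mf hx]
  exact Nat.div_self (Nat.pos_of_ne_zero Subgroup.index_ne_zero_of_finite)

theorem exists_isRestriction_dot_of_scaledMark_ne_zero {x u : Sig Mf}
    (hne : scaledMark Mf H x u ≠ 0) : ∃ h ∈ H, IsRestriction Mf u (dot Mf h x) :=
  exists_isRestriction_dot_of_invCount_ne_zero Mf fun h0 => hne (by simp [scaledMark, h0])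

variable {Mf}

namespace Reps

theorem eq_of_dot_eq (R : Reps Mf H) {x y : Sig Mf} (hx : x ∈ R.R) (hy : y ∈ R.R) {h : G}
    (hh : h ∈ H) (hxy : dot Mf h x = y) : x = y :=
  (R.complete x (R.subset x hx)).unique ⟨hx, 1, H.one_mem, dot_one Mf x⟩ ⟨hy, h, hh, hxy⟩

theorem det_scaledMark [Finite G] (R : Reps Mf H) [Fintype R.R] :
    (Matrix.of fun x u : R.R => (scaledMark Mf H x u : ℤ)).det = 1 := by
  refine Matrix.BlockTriangular.det_eq_one (b := fun x : R.R => OrderDual.toDual (Nat.card x.1.1))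
    (fun x u hlt => ?_) (fun x => ?_) (fun x u hxu hcard => ?_)
  · by_contra hne
    obtain ⟨h, -, hres⟩ := exists_isRestriction_dot_of_scaledMark_ne_zero Mf (by simpa using hne)
    exact (hres.card_le.trans (card_conjS h _).le).not_gt hlt
  · simp [scaledMark_self Mf (R.subset _ x.2)]
  · by_contra hne
    obtain ⟨h, hh, hres⟩ := exists_isRestriction_dot_of_scaledMark_ne_zero Mf (by simpa using hne)
    have hdot := hres.eq_of_card_le ((card_conjS h _).trans (OrderDual.toDual.injective hcard)).le
    exact hxu (Subtype.ext (R.eq_of_dot_eq x.2 u.2 hh hdot.symm))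

end Reps

/-- `Ω̃(H,M) = ⊕_{(U,t) ∈ R(H,M)} (1/|W_H(U,t)|)·φ_H([(H/U)_t])·ℤ`:
there is a family `b` with `|W_H(U,t)| • b (U,t) = φ_H([(H/U)_t])` which is a free
`ℤ`-basis of `Ω̃(H,M) = ∏_{(K,s) ∈ R(H,M)} ℤ`. -/
theorem ghost_module_basis [Finite G] (hMf : ∀ K : Subgroup G, Finite (Mf.M K))
    (R : Reps Mf H) :
    ∃ b : ↥R.R → (↥R.R → ℤ),
      (∀ k : ↥R.R,
        (WCard Mf H k.1 : ℤ) • b k = fun u => (invCount Mf H k.1 u.1 : ℤ)) ∧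
      LinearIndependent ℤ b ∧
      Submodule.span ℤ (Set.range b) = ⊤ := by
  have : Fintype R.R := Fintype.ofFinite _
  refine ⟨fun x u => scaledMark Mf H x u, fun x => funext fun u => ?_,
    (Pi.basisFun ℤ R.R).is_basis_iff_det.mpr ?_⟩
  · simp only [Pi.smul_apply, smul_eq_mul]
    exact_mod_cast wCard_mul_scaledMark Mf (R.subset _ x.2) u
  · rw [Pi.basisFun_det_apply, R.det_scaledMark]
    exact isUnit_one

end
end LB
end
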